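/- arXiv:0807.1005 — 2 statements merged into one kernel-verified Lean document; each statement's English description precedes it below -/
import Mathlib

section
/- For any two probability distributions P and Q on a countable sample space with mass functions p and q, and any k ≥ 0, the P-probability of the set of outcomes x with -log₂ q(x) ≤ -log₂ p(x) - k is at most 2^{-k}. -/
/-! Markov's inequality for `q / p`: on the event, `p x ≤ 2^{-k} q x`, and `q` has total mass `1`. -/

theorem tsum_subtype_mul_le_le_tsum_div {X : Type*} {p q : X → ℝ} {c : ℝ} (hc : 0 < c)
    (hp : Summable p) (hq0 : ∀ x, 0 ≤ q x) (hq : Summable q) :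
    ∑' x : {x // p x * c ≤ q x}, p x ≤ (∑' x, q x) / c := by
  rw [le_div_iff₀ hc, ← tsum_mul_right]
  calc ∑' x : {x // p x * c ≤ q x}, p x * c
      ≤ ∑' x : {x // p x * c ≤ q x}, q x :=
        ((hp.subtype _).mul_right c).tsum_le_tsum (fun x => x.2) (hq.subtype _)
    _ ≤ ∑' x, q x := hq.tsum_subtype_le q _ hq0

theorem no_hypercompression_general {X : Type*}
    (p q : X → ℝ) (hq0 : ∀ x, 0 ≤ q x)
    (hp1 : HasSum p 1) (hq1 : HasSum q 1) (k : ℝ) :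
    (∑' x : {x : X // p x * 2 ^ k ≤ q x}, p x.1) ≤ 2 ^ (-k) := by
  have hmarkov := tsum_subtype_mul_le_le_tsum_div (Real.rpow_pos_of_pos two_pos k)
    hp1.summable hq0 hq1.summable
  rwa [hq1.tsum_eq, one_div, ← Real.rpow_neg zero_le_two] at hmarkov

/-- No-hypercompression inequality (Barron's inequality): for probability mass
functions `p`, `q` on a countable space and `k ≥ 0`, the `P`-probability of the
event that `q` assigns code length at least `k` bits less than `p`
(i.e. `q x ≥ p x · 2^k`) is at most `2^{-k}`. -/
theorem no_hypercompression {X : Type*} [Countable X]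
    (p q : X → ℝ) (hp0 : ∀ x, 0 ≤ p x) (hq0 : ∀ x, 0 ≤ q x)
    (hp1 : HasSum p 1) (hq1 : HasSum q 1) (k : ℝ) (hk : 0 ≤ k) :
    (∑' x : {x : X // p x * 2 ^ k ≤ q x}, p x.1) ≤ 2 ^ (-k) :=
  no_hypercompression_general p q hq0 hp1 hq1 k
end

section
/- Let Y₁ and Y₂ be random variables taking values in separable metric spaces Ω₁ and Ω₂. Let P and Q be probability measures on Ω₁ × Ω₂ admitting regular conditional distributions P(Y₂ | y₁) and Q(Y₂ | y₁). If for every y₁ ∈ Ω₁ the conditional distributions P(Y₂ | y₁) and Q(Y₂ | y₁) are mutually singular, then P and Q are mutually singular on Ω₁ × Ω₂. -/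
open MeasureTheory ProbabilityTheory

/-- Lemma 7 (Harremoës): if `P = μP ⊗ₘ κP` and `Q = μQ ⊗ₘ κQ` are probability
measures on a product of separable metric spaces given by regular conditional
distributions (Markov kernels) `κP`, `κQ`, and for every `y₁` the conditionals
`κP y₁` and `κQ y₁` are mutually singular, then `P` and `Q` are mutually
singular on `Ω₁ × Ω₂`. -/
theorem conditional_singularity_implies_singularity
    {Ω₁ Ω₂ : Type*}
    [MetricSpace Ω₁] [TopologicalSpace.SeparableSpace Ω₁]
    [MeasurableSpace Ω₁] [BorelSpace Ω₁]
    [MetricSpace Ω₂] [TopologicalSpace.SeparableSpace Ω₂]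
    [MeasurableSpace Ω₂] [BorelSpace Ω₂]
    (μP μQ : Measure Ω₁)
    [IsProbabilityMeasure μP] [IsProbabilityMeasure μQ]
    (κP κQ : Kernel Ω₁ Ω₂) [IsMarkovKernel κP] [IsMarkovKernel κQ]
    (hsing : ∀ y₁ : Ω₁, (κP y₁).MutuallySingular (κQ y₁)) :
    (μP.compProd κP).MutuallySingular (μQ.compProd κQ) := by
  haveI : SecondCountableTopology Ω₂ := UniformSpace.secondCountable_of_separable Ω₂
  haveI : MeasurableSpace.CountablyGenerated Ω₂ := by infer_instance
  set s := Kernel.mutuallySingularSet κP κQ with hs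
  have hms : MeasurableSet s := Kernel.measurableSet_mutuallySingularSet κP κQ
  refine ⟨sᶜ, hms.compl, ?_, ?_⟩
  · rw [Measure.compProd_apply hms.compl]
    have : ∀ a, κP a (Prod.mk a ⁻¹' sᶜ) = 0 := by
      intro a
      have h1 : Kernel.withDensity κQ (Kernel.rnDeriv κP κQ) a = 0 :=
        (Kernel.withDensity_rnDeriv_eq_zero_iff_mutuallySingular κP κQ a).mpr (hsing a)
      have h2 : κP a = Kernel.singularPart κP κQ a := by
        conv_lhs => rw [← Kernel.rnDeriv_add_singularPart κP κQ]
        rw [Kernel.coe_add, Pi.add_apply, h1, zero_add]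
      have hpre : Prod.mk a ⁻¹' sᶜ = (Kernel.mutuallySingularSetSlice κP κQ a)ᶜ := rfl
      rw [h2, hpre]
      exact Kernel.singularPart_compl_mutuallySingularSetSlice κP κQ a
    exact (lintegral_congr this).trans lintegral_zero
  · rw [compl_compl, Measure.compProd_apply hms]
    have : ∀ a, κQ a (Prod.mk a ⁻¹' s) = 0 := by
      intro a
      have hpre : Prod.mk a ⁻¹' s = Kernel.mutuallySingularSetSlice κP κQ a := rfl
      rw [hpre]
      exact Kernel.measure_mutuallySingularSetSlice κP κQ a
    simp [this]
end
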